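/- Let b_1,…,b_N ∈ C_c^∞(ℝ^N) and f, g ∈ C_c^∞(ℝ^N). Then the following integration-by-parts identity holds: −(1/2) ∫_{ℝ^N} [ df(b) Δ^H g + dg(b) Δ^H f − div b · ⟨∇^H f, ∇^H g⟩ ] dp = ∫_{ℝ^N} ∑_{i,j=1}^{2n} ((Z_i b_j + Z_j b_i)/2) Z_i f · Z_j g dp + (1/2) ∫_{ℝ^N} ∑_{k=1}^{2n} ( Z_k b_N + 4 J(b)_k ) ( Tg · Z_k f + Tf · Z_k g ) dp, where df(b) = ∑_{j=1}^N b_j Z_j f, Δ^H g = ∑_{i=1}^{2n} Z_i Z_i g, div b = ∑_{j=1}^N Z_j b_j, ⟨∇^H f, ∇^H g⟩ = ∑_{k=1}^{2n} Z_k f · Z_k g, and J(b)_k = −b_{n+k} for 1 ≤ k ≤ n and J(b)_k = b_{k−n} for n < k ≤ 2n. -/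

import Mathlib

open MeasureTheory Filter Topology
open scoped ENNReal

noncomputable section

/-- Points of the Heisenberg group ℍⁿ, identified with ℝ^(2n+1). -/
abbrev HPoint (n : ℕ) := Fin (2 * n + 1) → ℝ

variable {n : ℕ}

/-- Index of the vertical coordinate `t`. -/
def tIdx (n : ℕ) : Fin (2 * n + 1) := ⟨2 * n, by omega⟩

/-- Index of the coordinate `x_j`, `1 ≤ j ≤ n`. -/
def xIdx (n : ℕ) (j : Fin n) : Fin (2 * n + 1) := ⟨j.1, by have := j.2; omega⟩

/-- Index of the coordinate `y_j`, `1 ≤ j ≤ n`. -/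
def yIdx (n : ℕ) (j : Fin n) : Fin (2 * n + 1) := ⟨n + j.1, by have := j.2; omega⟩

/-- Embedding of horizontal indices. -/
def hIdx {n : ℕ} (i : Fin (2 * n)) : Fin (2 * n + 1) := ⟨i.1, by have := i.2; omega⟩

/-- The Heisenberg group law. -/
def hmul (p q : HPoint n) : HPoint n := fun i =>
  if i = tIdx n then
    p i + q i + 2 * ∑ j : Fin n,
      (q (xIdx n j) * p (yIdx n j) - p (xIdx n j) * q (yIdx n j))
  else p i + q i

/-- The Heisenberg inverse: `p⁻¹ = -p`. -/
def hinv (p : HPoint n) : HPoint n := -p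

/-- Intrinsic dilations `δ_λ`. -/
def hdil (lam : ℝ) (w : HPoint n) : HPoint n := fun i =>
  if i = tIdx n then lam ^ 2 * w i else lam * w i

/-- Euclidean partial derivative in the direction of the `k`-th coordinate. -/
def pder (k : Fin (2 * n + 1)) (f : HPoint n → ℝ) (p : HPoint n) : ℝ :=
  fderiv ℝ f p (Pi.single k 1)

/-- Coefficient of `∂_t` in the left invariant vector field `Z_i`. -/
def zCoef {n : ℕ} (i : Fin (2 * n)) (p : HPoint n) : ℝ :=
  if h : i.1 < n then 2 * p (yIdx n ⟨i.1, h⟩)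
  else -2 * p (xIdx n ⟨i.1 - n, by have := i.2; omega⟩)

/-- Horizontal left invariant vector fields `Z_i`, `1 ≤ i ≤ 2n`. -/
def Zd (i : Fin (2 * n)) (f : HPoint n → ℝ) (p : HPoint n) : ℝ :=
  pder (hIdx i) f p + zCoef i p * pder (tIdx n) f p

/-- The vertical vector field `T = ∂_t`. -/
def Td (f : HPoint n → ℝ) (p : HPoint n) : ℝ := pder (tIdx n) f p

/-- Horizontal right invariant vector fields. -/
def Zrd (i : Fin (2 * n)) (f : HPoint n → ℝ) (p : HPoint n) : ℝ :=
  pder (hIdx i) f p - zCoef i p * pder (tIdx n) f p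

/-- All left invariant fields `Z_1, …, Z_N` (with `Z_N = T`). -/
def Zfull (j : Fin (2 * n + 1)) (f : HPoint n → ℝ) (p : HPoint n) : ℝ :=
  if h : j.1 < 2 * n then Zd ⟨j.1, h⟩ f p else Td f p

/-- All right invariant fields `Z_1^r, …, Z_N^r` (with `Z_N^r = T`). -/
def Zrfull (j : Fin (2 * n + 1)) (f : HPoint n → ℝ) (p : HPoint n) : ℝ :=
  if h : j.1 < 2 * n then Zrd ⟨j.1, h⟩ f p else Td f p

/-- Test functions on an open set `Ω`. -/
def IsTestOn (Ω : Set (HPoint n)) (φ : HPoint n → ℝ) : Prop :=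
  ContDiff ℝ (⊤ : ℕ∞) φ ∧ HasCompactSupport φ ∧ tsupport φ ⊆ Ω

/-- `g` is the weak derivative of `f` along `Z_i` on `Ω`. -/
def HasWeakZDerivOn (Ω : Set (HPoint n)) (i : Fin (2 * n)) (f g : HPoint n → ℝ) : Prop :=
  ∀ φ : HPoint n → ℝ, IsTestOn Ω φ →
    ∫ p in Ω, g p * φ p = - ∫ p in Ω, f p * Zd i φ p

/-- `g` is the weak derivative of `f` along `T` on `Ω`. -/
def HasWeakTDerivOn (Ω : Set (HPoint n)) (f g : HPoint n → ℝ) : Prop :=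
  ∀ φ : HPoint n → ℝ, IsTestOn Ω φ →
    ∫ p in Ω, g p * φ p = - ∫ p in Ω, f p * Td φ p

/-- The vector field `Z_i` viewed as a vector at `p`. -/
def zVec (i : Fin (2 * n)) (p : HPoint n) : HPoint n := fun k =>
  (if k = hIdx i then 1 else 0) + (if k = tIdx n then zCoef i p else 0)

/-- The Carnot–Carathéodory distance. -/
def ccDist (p q : HPoint n) : ℝ :=
  sInf {L : ℝ | ∃ γ : ℝ → HPoint n, ∃ h : ℝ → Fin (2 * n) → ℝ, ∃ K : NNReal,
    LipschitzOnWith K γ (Set.Icc 0 1) ∧ γ 0 = p ∧ γ 1 = q ∧ Measurable h ∧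
    (∀ᵐ τ ∂(volume.restrict (Set.Ioo (0:ℝ) 1)),
      HasDerivAt γ (∑ i : Fin (2 * n), h τ i • zVec i (γ τ)) τ) ∧
    L = ∫ τ in Set.Icc (0:ℝ) 1, Real.sqrt (∑ i : Fin (2 * n), h τ i ^ 2)}

/-- Horizontal part `(w_H, 0)` of a point. -/
def horiz (w : HPoint n) : HPoint n := fun k => if k = tIdx n then 0 else w k

/-- Euclidean norm of the horizontal part. -/
def normH (w : HPoint n) : ℝ := Real.sqrt (∑ i : Fin (2 * n), w (hIdx i) ^ 2)

/-- Group convolution `f * g`. -/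
def hconv (f g : HPoint n → ℝ) (p : HPoint n) : ℝ := ∫ q, f q * g (hmul (hinv q) p)

/-- Rescaled mollifier `ρ_ε`. -/
def mollK (ρ : HPoint n → ℝ) (ε : ℝ) (p : HPoint n) : ℝ :=
  (ε ^ (2 * n + 2))⁻¹ * ρ (hdil ε⁻¹ p)


/-- The `k`-th component of `J(b) = (-b_{n+1},…,-b_{2n}, b_1,…,b_n, 0)`, for a horizontal
index `k`. -/
def Jcomp {n : ℕ} (b : Fin (2 * n + 1) → HPoint n → ℝ) (k : Fin (2 * n))
    (p : HPoint n) : ℝ :=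
  if h : k.1 < n then -(b (hIdx (⟨n + k.1, by omega⟩ : Fin (2 * n))) p)
  else b (hIdx (⟨k.1 - n, by have := k.2; omega⟩ : Fin (2 * n))) p

/-! ### Auxiliary lemmas -/

section Calculus

lemma contDiff_coord (m : Fin (2 * n + 1)) : ContDiff ℝ (⊤ : ℕ∞) (fun p : HPoint n => p m) :=
  (ContinuousLinearMap.proj m : HPoint n →L[ℝ] ℝ).contDiff

lemma contDiff_pder {f : HPoint n → ℝ} (hf : ContDiff ℝ (⊤ : ℕ∞) f) (k : Fin (2 * n + 1)) :
    ContDiff ℝ (⊤ : ℕ∞) (pder k f) := by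
  unfold pder
  exact (hf.fderiv_right (by simp)).clm_apply contDiff_const

lemma hcs_pder {f : HPoint n → ℝ} (hfc : HasCompactSupport f) (k : Fin (2 * n + 1)) :
    HasCompactSupport (pder k f) :=
  (hfc.fderiv ℝ).comp_left (g := fun L : HPoint n →L[ℝ] ℝ => L (Pi.single k 1)) rfl

lemma pder_add {u v : HPoint n → ℝ} {p : HPoint n} (k : Fin (2 * n + 1))
    (hu : DifferentiableAt ℝ u p) (hv : DifferentiableAt ℝ v p) :
    pder k (fun q => u q + v q) p = pder k u p + pder k v p := by
  unfold pder; rw [fderiv_fun_add hu hv]; simp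

lemma pder_sub {u v : HPoint n → ℝ} {p : HPoint n} (k : Fin (2 * n + 1))
    (hu : DifferentiableAt ℝ u p) (hv : DifferentiableAt ℝ v p) :
    pder k (fun q => u q - v q) p = pder k u p - pder k v p := by
  unfold pder; rw [fderiv_fun_sub hu hv]; simp

lemma pder_mul {u v : HPoint n → ℝ} {p : HPoint n} (k : Fin (2 * n + 1))
    (hu : DifferentiableAt ℝ u p) (hv : DifferentiableAt ℝ v p) :
    pder k (fun q => u q * v q) p = pder k u p * v p + u p * pder k v p := by
  unfold pder; rw [fderiv_fun_mul hu hv]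
  simp only [ContinuousLinearMap.add_apply, ContinuousLinearMap.smul_apply, smul_eq_mul]
  ring

lemma pder_const_mul {u : HPoint n → ℝ} {p : HPoint n} (k : Fin (2 * n + 1)) (c : ℝ)
    (hu : DifferentiableAt ℝ u p) :
    pder k (fun q => c * u q) p = c * pder k u p := by
  unfold pder; rw [fderiv_const_mul hu c]
  simp

lemma pder_sum {ι : Type*} {p : HPoint n} (k : Fin (2 * n + 1)) (s : Finset ι)
    (h : ι → HPoint n → ℝ) (hh : ∀ j ∈ s, DifferentiableAt ℝ (h j) p) :
    pder k (fun q => ∑ j ∈ s, h j q) p = ∑ j ∈ s, pder k (h j) p := by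
  unfold pder; rw [fderiv_fun_sum hh]
  simp

lemma pder_pder_comm {f : HPoint n → ℝ} (hf : ContDiff ℝ (⊤ : ℕ∞) f)
    (k l : Fin (2 * n + 1)) (p : HPoint n) :
    pder k (pder l f) p = pder l (pder k f) p := by
  have hd : ContDiff ℝ (⊤ : ℕ∞) (fderiv ℝ f) := hf.fderiv_right (by simp)
  have e : ∀ v w : HPoint n, fderiv ℝ (fun q => fderiv ℝ f q v) p w
      = fderiv ℝ (fderiv ℝ f) p w v := by
    intro v w
    rw [fderiv_clm_apply ((hd.differentiable (by simp)) p) (differentiableAt_const v)]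
    simp
  have hsymm : IsSymmSndFDerivAt ℝ f p := hf.contDiffAt.isSymmSndFDerivAt (by rw [minSmoothness_of_isRCLikeNormedField]; exact WithTop.coe_le_coe.mpr (le_top : (2 : ℕ∞) ≤ ⊤))
  unfold pder
  rw [e, e]
  exact hsymm _ _

end Calculus

section ZCoef

/-- The coordinate index appearing in `zCoef i`. -/
def zIdx {n : ℕ} (i : Fin (2 * n)) : Fin (2 * n + 1) :=
  if h : i.1 < n then yIdx n ⟨i.1, h⟩ else xIdx n ⟨i.1 - n, by have := i.2; omega⟩

/-- The sign appearing in `zCoef i`. -/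
def zSgn {n : ℕ} (i : Fin (2 * n)) : ℝ := if i.1 < n then 2 else -2

lemma zCoef_eq (i : Fin (2 * n)) : zCoef (n := n) i = fun p => zSgn i * p (zIdx i) := by
  funext p; unfold zCoef zSgn zIdx; split_ifs with h <;> rfl

lemma zIdx_val (j : Fin (2 * n)) :
    (zIdx j).1 = if j.1 < n then n + j.1 else j.1 - n := by
  unfold zIdx yIdx xIdx; split_ifs with h <;> rfl

lemma zIdx_ne_tIdx (i : Fin (2 * n)) : zIdx i ≠ tIdx n := by
  intro h
  have h1 := congrArg Fin.val h
  rw [zIdx_val] at h1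
  have h2 : (tIdx n).1 = 2 * n := rfl
  rw [h2] at h1
  have := i.2
  split_ifs at h1 <;> omega

lemma contDiff_zCoef (i : Fin (2 * n)) : ContDiff ℝ (⊤ : ℕ∞) (zCoef (n := n) i) := by
  rw [zCoef_eq]; exact contDiff_const.mul (contDiff_coord _)

lemma pder_cmul (c : ℝ) (m k : Fin (2 * n + 1)) (p : HPoint n) :
    pder k (fun q : HPoint n => c * q m) p = c * (if m = k then 1 else 0) := by
  rw [pder_const_mul k c ((contDiff_coord m).differentiable (by simp) p)]
  congr 1
  unfold pder
  rw [show (fun q : HPoint n => q m)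
      = ⇑(ContinuousLinearMap.proj m : HPoint n →L[ℝ] ℝ) from rfl,
    ContinuousLinearMap.fderiv]
  simp [Pi.single_apply]

/-- `pder (hIdx k) (zCoef j)` as a constant. -/
def zcp {n : ℕ} (j k : Fin (2 * n)) : ℝ := zSgn j * (if zIdx j = hIdx k then 1 else 0)

lemma pder_h_zCoef (j k : Fin (2 * n)) (p : HPoint n) :
    pder (hIdx k) (zCoef j) p = zcp j k := by
  rw [zCoef_eq, pder_cmul]; rfl

lemma pder_t_zCoef (j : Fin (2 * n)) (p : HPoint n) :
    pder (tIdx n) (zCoef j) p = 0 := by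
  rw [zCoef_eq, pder_cmul, if_neg (zIdx_ne_tIdx j), mul_zero]

lemma zcp_eq (j k : Fin (2 * n)) :
    zcp j k = (if j.1 < n then (2:ℝ) else -2)
      * (if (if j.1 < n then n + j.1 else j.1 - n) = k.1 then 1 else 0) := by
  have hcond : (zIdx j = hIdx k) ↔ ((if j.1 < n then n + j.1 else j.1 - n) = k.1) := by
    rw [Fin.ext_iff, zIdx_val]; exact Iff.rfl
  unfold zcp zSgn
  rw [if_congr hcond rfl rfl]

lemma sum_zcp (b : Fin (2 * n + 1) → HPoint n → ℝ) (i : Fin (2 * n)) (p : HPoint n) :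
    ∑ j : Fin (2 * n), (zcp j i - zcp i j) * b (hIdx j) p = 4 * Jcomp b i p := by
  classical
  by_cases h : i.1 < n
  · have hlt : n + i.1 < 2 * n := by omega
    have key : ∀ j : Fin (2 * n),
        zcp j i - zcp i j = if j = (⟨n + i.1, hlt⟩ : Fin (2 * n)) then (-4:ℝ) else 0 := by
      intro j
      rw [zcp_eq, zcp_eq]
      by_cases hj : j = (⟨n + i.1, hlt⟩ : Fin (2 * n))
      · have hv : j.1 = n + i.1 := by rw [hj]
        rw [if_pos hj, if_pos h, if_pos h, if_neg (show ¬ j.1 < n by omega),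
          if_neg (show ¬ j.1 < n by omega), if_pos (show j.1 - n = i.1 by omega),
          if_pos (show n + i.1 = j.1 by omega)]
        norm_num
      · have hv : ¬ j.1 = n + i.1 := fun hh => hj (Fin.ext hh)
        rw [if_neg hj, if_pos h, if_pos h, if_neg (show ¬ n + i.1 = j.1 by omega)]
        by_cases h2 : j.1 < n
        · rw [if_pos h2, if_pos h2, if_neg (show ¬ n + j.1 = i.1 by omega)]
          norm_num
        · rw [if_neg h2, if_neg h2, if_neg (show ¬ j.1 - n = i.1 by omega)]
          norm_num
    calc ∑ j : Fin (2 * n), (zcp j i - zcp i j) * b (hIdx j) p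
        = ∑ j : Fin (2 * n), (if j = (⟨n + i.1, hlt⟩ : Fin (2 * n))
            then (-4) * b (hIdx (⟨n + i.1, hlt⟩ : Fin (2 * n))) p else 0) := by
          refine Finset.sum_congr rfl fun j _ => ?_
          rw [key j]
          by_cases hj : j = (⟨n + i.1, hlt⟩ : Fin (2 * n))
          · rw [if_pos hj, if_pos hj, hj]
          · rw [if_neg hj, if_neg hj, zero_mul]
      _ = (-4) * b (hIdx (⟨n + i.1, hlt⟩ : Fin (2 * n))) p := by
          rw [Finset.sum_ite_eq' Finset.univ _ (fun _ => (-4) * b (hIdx (⟨n + i.1, hlt⟩ : Fin (2 * n))) p),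
            if_pos (Finset.mem_univ _)]
      _ = 4 * Jcomp b i p := by
          unfold Jcomp; rw [dif_pos h]; ring
  · have hlt : i.1 - n < 2 * n := by have := i.2; omega
    have key : ∀ j : Fin (2 * n),
        zcp j i - zcp i j = if j = (⟨i.1 - n, hlt⟩ : Fin (2 * n)) then (4:ℝ) else 0 := by
      intro j
      rw [zcp_eq, zcp_eq]
      have hi2 := i.2
      by_cases hj : j = (⟨i.1 - n, hlt⟩ : Fin (2 * n))
      · have hv : j.1 = i.1 - n := by rw [hj]
        rw [if_pos hj, if_neg h, if_neg h, if_pos (show j.1 < n by omega),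
          if_pos (show j.1 < n by omega), if_pos (show n + j.1 = i.1 by omega),
          if_pos (show i.1 - n = j.1 by omega)]
        norm_num
      · have hv : ¬ j.1 = i.1 - n := fun hh => hj (Fin.ext hh)
        rw [if_neg hj, if_neg h, if_neg h, if_neg (show ¬ i.1 - n = j.1 by omega)]
        by_cases h2 : j.1 < n
        · rw [if_pos h2, if_pos h2, if_neg (show ¬ n + j.1 = i.1 by omega)]
          norm_num
        · rw [if_neg h2, if_neg h2, if_neg (show ¬ j.1 - n = i.1 by omega)]
          norm_num
    calc ∑ j : Fin (2 * n), (zcp j i - zcp i j) * b (hIdx j) p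
        = ∑ j : Fin (2 * n), (if j = (⟨i.1 - n, hlt⟩ : Fin (2 * n))
            then (4:ℝ) * b (hIdx (⟨i.1 - n, hlt⟩ : Fin (2 * n))) p else 0) := by
          refine Finset.sum_congr rfl fun j _ => ?_
          rw [key j]
          by_cases hj : j = (⟨i.1 - n, hlt⟩ : Fin (2 * n))
          · rw [if_pos hj, if_pos hj, hj]
          · rw [if_neg hj, if_neg hj, zero_mul]
      _ = 4 * b (hIdx (⟨i.1 - n, hlt⟩ : Fin (2 * n))) p := by
          rw [Finset.sum_ite_eq' Finset.univ _ (fun _ => (4:ℝ) * b (hIdx (⟨i.1 - n, hlt⟩ : Fin (2 * n))) p),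
            if_pos (Finset.mem_univ _)]
      _ = 4 * Jcomp b i p := by
          unfold Jcomp; rw [dif_neg h]

end ZCoef

section ZdCalculus

variable {u v f g : HPoint n → ℝ} {p : HPoint n}

lemma contDiff_Zd (hf : ContDiff ℝ (⊤ : ℕ∞) f) (i : Fin (2 * n)) : ContDiff ℝ (⊤ : ℕ∞) (Zd i f) := by
  unfold Zd
  exact (contDiff_pder hf _).add ((contDiff_zCoef i).mul (contDiff_pder hf _))

lemma contDiff_Td (hf : ContDiff ℝ (⊤ : ℕ∞) f) : ContDiff ℝ (⊤ : ℕ∞) (Td f) := by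
  unfold Td; exact contDiff_pder hf _

lemma hcs_Zd (hfc : HasCompactSupport f) (i : Fin (2 * n)) : HasCompactSupport (Zd i f) := by
  unfold Zd
  exact (hcs_pder hfc _).add ((hcs_pder hfc _).mul_left)

lemma hcs_Td (hfc : HasCompactSupport f) : HasCompactSupport (Td f) := hcs_pder hfc _

lemma Zfull_hIdx (i : Fin (2 * n)) (f : HPoint n → ℝ) : Zfull (hIdx i) f = Zd i f := by
  funext p; unfold Zfull
  rw [dif_pos (show (hIdx i).1 < 2 * n from i.2)]
  rfl

lemma Zfull_tIdx (f : HPoint n → ℝ) : Zfull (tIdx n) f = Td f := by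
  funext p; unfold Zfull
  rw [dif_neg (show ¬ (tIdx n).1 < 2 * n from by simp [tIdx])]

lemma contDiff_Zfull (hf : ContDiff ℝ (⊤ : ℕ∞) f) (j : Fin (2 * n + 1)) :
    ContDiff ℝ (⊤ : ℕ∞) (Zfull j f) := by
  by_cases h : j.1 < 2 * n
  · have : Zfull j f = Zd ⟨j.1, h⟩ f := by funext p; unfold Zfull; rw [dif_pos h]
    rw [this]; exact contDiff_Zd hf _
  · have : Zfull j f = Td f := by funext p; unfold Zfull; rw [dif_neg h]
    rw [this]; exact contDiff_Td hf

lemma Zd_add (i : Fin (2 * n)) (hu : DifferentiableAt ℝ u p) (hv : DifferentiableAt ℝ v p) :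
    Zd i (fun q => u q + v q) p = Zd i u p + Zd i v p := by
  unfold Zd
  rw [pder_add _ hu hv, pder_add _ hu hv]; ring

lemma Zd_sub (i : Fin (2 * n)) (hu : DifferentiableAt ℝ u p) (hv : DifferentiableAt ℝ v p) :
    Zd i (fun q => u q - v q) p = Zd i u p - Zd i v p := by
  unfold Zd
  rw [pder_sub _ hu hv, pder_sub _ hu hv]; ring

lemma Zd_mul (i : Fin (2 * n)) (hu : DifferentiableAt ℝ u p) (hv : DifferentiableAt ℝ v p) :
    Zd i (fun q => u q * v q) p = Zd i u p * v p + u p * Zd i v p := by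
  unfold Zd
  rw [pder_mul _ hu hv, pder_mul _ hu hv]; ring

lemma Zd_const_mul (i : Fin (2 * n)) (c : ℝ) (hu : DifferentiableAt ℝ u p) :
    Zd i (fun q => c * u q) p = c * Zd i u p := by
  unfold Zd
  rw [pder_const_mul _ c hu, pder_const_mul _ c hu]; ring

lemma Zd_sum {ι : Type*} (i : Fin (2 * n)) (s : Finset ι) (h : ι → HPoint n → ℝ)
    (hh : ∀ j ∈ s, DifferentiableAt ℝ (h j) p) :
    Zd i (fun q => ∑ j ∈ s, h j q) p = ∑ j ∈ s, Zd i (h j) p := by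
  unfold Zd
  rw [pder_sum _ s h hh, pder_sum _ s h hh, Finset.mul_sum, ← Finset.sum_add_distrib]

lemma Td_mul (hu : DifferentiableAt ℝ u p) (hv : DifferentiableAt ℝ v p) :
    Td (fun q => u q * v q) p = Td u p * v p + u p * Td v p := by
  unfold Td
  rw [pder_mul _ hu hv]

lemma Td_const_mul (c : ℝ) (hu : DifferentiableAt ℝ u p) :
    Td (fun q => c * u q) p = c * Td u p := by
  unfold Td
  rw [pder_const_mul _ c hu]

lemma Td_sum {ι : Type*} (s : Finset ι) (h : ι → HPoint n → ℝ)
    (hh : ∀ j ∈ s, DifferentiableAt ℝ (h j) p) :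
    Td (fun q => ∑ j ∈ s, h j q) p = ∑ j ∈ s, Td (h j) p := by
  unfold Td
  rw [pder_sum _ s h hh]

lemma pder_Zd (hf : ContDiff ℝ (⊤ : ℕ∞) f) (j : Fin (2 * n)) (k : Fin (2 * n + 1)) (p : HPoint n) :
    pder k (Zd j f) p = pder k (pder (hIdx j) f) p
      + (pder k (zCoef j) p * pder (tIdx n) f p + zCoef j p * pder k (pder (tIdx n) f) p) := by
  show pder k (fun q => pder (hIdx j) f q + zCoef j q * pder (tIdx n) f q) p = _
  rw [pder_add k ((contDiff_pder hf _).differentiable (by simp) p)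
      (((contDiff_zCoef j).mul (contDiff_pder hf _)).differentiable (by simp) p),
    pder_mul k ((contDiff_zCoef j).differentiable (by simp) p)
      ((contDiff_pder hf _).differentiable (by simp) p)]

lemma Zd_Zd_comm (hf : ContDiff ℝ (⊤ : ℕ∞) f) (i j : Fin (2 * n)) (p : HPoint n) :
    Zd i (Zd j f) p = Zd j (Zd i f) p + (zcp j i - zcp i j) * Td f p := by
  show pder (hIdx i) (Zd j f) p + zCoef i p * pder (tIdx n) (Zd j f) p
    = (pder (hIdx j) (Zd i f) p + zCoef j p * pder (tIdx n) (Zd i f) p) + _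
  rw [pder_Zd hf j (hIdx i) p, pder_Zd hf j (tIdx n) p, pder_Zd hf i (hIdx j) p,
    pder_Zd hf i (tIdx n) p, pder_h_zCoef, pder_h_zCoef, pder_t_zCoef, pder_t_zCoef]
  unfold Td
  linear_combination (pder_pder_comm hf (hIdx i) (hIdx j) p)
    + zCoef j p * (pder_pder_comm hf (hIdx i) (tIdx n) p)
    + zCoef i p * (pder_pder_comm hf (tIdx n) (hIdx j) p)

lemma Td_Zd_comm (hf : ContDiff ℝ (⊤ : ℕ∞) f) (i : Fin (2 * n)) (p : HPoint n) :
    Td (Zd i f) p = Zd i (Td f) p := by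
  show pder (tIdx n) (Zd i f) p = pder (hIdx i) (Td f) p + zCoef i p * pder (tIdx n) (Td f) p
  rw [pder_Zd hf i (tIdx n) p, pder_t_zCoef]
  unfold Td
  linear_combination pder_pder_comm hf (tIdx n) (hIdx i) p

end ZdCalculus

section Integrals

variable {f : HPoint n → ℝ}

lemma hcs_sum {ι : Type*} (s : Finset ι) (h : ι → HPoint n → ℝ)
    (hh : ∀ j, HasCompactSupport (h j)) :
    HasCompactSupport (fun p => ∑ j ∈ s, h j p) := by
  classical
  induction s using Finset.induction_on with
  | empty =>
    simp only [Finset.sum_empty]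
    show IsCompact (tsupport fun _ : HPoint n => (0:ℝ))
    have : tsupport (fun _ : HPoint n => (0:ℝ)) = ∅ := by
      simp [tsupport, Function.support]
    rw [this]; exact isCompact_empty
  | insert _ _ hx ih =>
    simp only [Finset.sum_insert hx]
    exact (hh _).add ih

lemma hcs_sub {u v : HPoint n → ℝ} (hu : HasCompactSupport u) (hv : HasCompactSupport v) :
    HasCompactSupport (fun q => u q - v q) := by
  have : (fun q => u q - v q) = fun q => u q + (-1 : ℝ) * v q := by funext q; ring
  rw [this]
  exact hu.add hv.mul_left

lemma integrable_cc {F : HPoint n → ℝ} (h1 : ContDiff ℝ (⊤ : ℕ∞) F) (h2 : HasCompactSupport F) :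
    Integrable F (volume : Measure (HPoint n)) :=
  h1.continuous.integrable_of_hasCompactSupport h2

lemma integral_pder_eq_zero (hf : ContDiff ℝ (⊤ : ℕ∞) f) (hfc : HasCompactSupport f)
    (k : Fin (2 * n + 1)) :
    ∫ p, pder k f p = 0 := by
  have h1 : Differentiable ℝ f := hf.differentiable (by simp)
  have hInt : Integrable (pder k f) (volume : Measure (HPoint n)) :=
    integrable_cc (contDiff_pder hf k) (hcs_pder hfc k)
  have key := integral_mul_fderiv_eq_neg_fderiv_mul_of_integrable (μ := volume)
    (f := fun _ : HPoint n => (1:ℝ)) (g := f) (v := Pi.single k 1)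
    ?_ ?_ ?_ (fun x _ => differentiableAt_const 1) (fun x _ => h1 x)
  · show ∫ p, pder k f p = 0
    unfold pder
    simpa [fderiv_const] using key
  · simp
  · simp only [one_mul]; exact hInt
  · simpa using integrable_cc hf hfc

lemma integral_Td_eq_zero (hf : ContDiff ℝ (⊤ : ℕ∞) f) (hfc : HasCompactSupport f) :
    ∫ p, Td f p = 0 :=
  integral_pder_eq_zero hf hfc (tIdx n)

lemma integral_Zd_eq_zero (hf : ContDiff ℝ (⊤ : ℕ∞) f) (hfc : HasCompactSupport f) (i : Fin (2 * n)) :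
    ∫ p, Zd i f p = 0 := by
  have e : ∀ p, Zd i f p = pder (hIdx i) f p + pder (tIdx n) (fun q => zCoef i q * f q) p := by
    intro p
    unfold Zd
    rw [pder_mul _ ((contDiff_zCoef i).differentiable (by simp) p) (hf.differentiable (by simp) p),
      pder_t_zCoef]
    ring
  have h2 : ContDiff ℝ (⊤ : ℕ∞) (fun q => zCoef i q * f q) := (contDiff_zCoef i).mul hf
  have h3 : HasCompactSupport (fun q => zCoef i q * f q) := hfc.mul_left
  calc ∫ p, Zd i f p
      = ∫ p, (pder (hIdx i) f p + pder (tIdx n) (fun q => zCoef i q * f q) p) := by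
        simp only [e]
    _ = (∫ p, pder (hIdx i) f p) + ∫ p, pder (tIdx n) (fun q => zCoef i q * f q) p :=
        integral_add (integrable_cc (contDiff_pder hf _) (hcs_pder hfc _))
          (integrable_cc (contDiff_pder h2 _) (hcs_pder h3 _))
    _ = 0 := by
        rw [integral_pder_eq_zero hf hfc, integral_pder_eq_zero h2 h3]; ring

end Integrals

lemma sum_split (F : Fin (2 * n + 1) → ℝ) :
    ∑ j, F j = (∑ i : Fin (2 * n), F (hIdx i)) + F (tIdx n) := by
  rw [Fin.sum_univ_castSucc]
  rfl

/-- Purely algebraic core of the integration by parts computation. -/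
lemma alg_core {m : ℕ} (DB : Fin m → Fin m → ℝ) (DBt Bh F G TZF TZG J : Fin m → ℝ)
    (FF GG s : Fin m → Fin m → ℝ) (BN TB TF TG df dg V : ℝ)
    (hFF : ∀ i j, FF i j = FF j i + s i j * TF)
    (hGG : ∀ i j, GG i j = GG j i + s i j * TG)
    (hs : ∀ i, (∑ j, s i j * Bh j) = 4 * J i) :
    -(1/2) * (df * (∑ i, GG i i) + dg * (∑ i, FF i i) - ((∑ i, DB i i) + TB) * V)
      = (∑ i, ∑ j, ((DB i j + DB j i) / 2) * F i * G j)
        + (1/2) * (∑ k, (DBt k + 4 * J k) * (TG * F k + TF * G k))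
        + ((∑ i, (-(1/2) * (((((∑ j, (DB i j * F j + Bh j * FF i j)) + (DBt i * TF + BN * TZF i)) * G i + df * GG i i) + ((((∑ j, (DB i j * G j + Bh j * GG i j)) + (DBt i * TG + BN * TZG i)) * F i + dg * FF i i))) - (DB i i * V + Bh i * (∑ k, (FF i k * G k + F k * GG i k))))))
          + (1/2) * (TB * V + BN * (∑ k, (TZF k * G k + F k * TZG k)))) := by
  classical
  -- rewrite the mixed second order sums using the commutation hypotheses
  have h1 : ∀ i : Fin m, (∑ j, (DB i j * F j + Bh j * FF i j))
      = (∑ j, DB i j * F j) + ((∑ j, Bh j * FF j i) + 4 * J i * TF) := by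
    intro i
    rw [Finset.sum_add_distrib]
    congr 1
    calc (∑ j, Bh j * FF i j) = (∑ j, (Bh j * FF j i + s i j * Bh j * TF)) :=
          Finset.sum_congr rfl fun j _ => by rw [hFF i j]; ring
      _ = (∑ j, Bh j * FF j i) + ∑ j, s i j * Bh j * TF := Finset.sum_add_distrib
      _ = (∑ j, Bh j * FF j i) + (∑ j, s i j * Bh j) * TF := by rw [Finset.sum_mul]
      _ = (∑ j, Bh j * FF j i) + 4 * J i * TF := by rw [hs i]
  have h2 : ∀ i : Fin m, (∑ j, (DB i j * G j + Bh j * GG i j))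
      = (∑ j, DB i j * G j) + ((∑ j, Bh j * GG j i) + 4 * J i * TG) := by
    intro i
    rw [Finset.sum_add_distrib]
    congr 1
    calc (∑ j, Bh j * GG i j) = (∑ j, (Bh j * GG j i + s i j * Bh j * TG)) :=
          Finset.sum_congr rfl fun j _ => by rw [hGG i j]; ring
      _ = (∑ j, Bh j * GG j i) + ∑ j, s i j * Bh j * TG := Finset.sum_add_distrib
      _ = (∑ j, Bh j * GG j i) + (∑ j, s i j * Bh j) * TG := by rw [Finset.sum_mul]
      _ = (∑ j, Bh j * GG j i) + 4 * J i * TG := by rw [hs i]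
  -- symmetrisation of the first order double sum
  have g1 : (∑ i, ((∑ j, DB i j * F j) * G i + (∑ j, DB i j * G j) * F i))
      = 2 * (∑ i, ∑ j, ((DB i j + DB j i) / 2) * F i * G j) := by
    rw [Finset.sum_add_distrib]
    have e1 : (∑ i, (∑ j, DB i j * F j) * G i) = ∑ i, ∑ j, DB j i * (F i * G j) := by
      rw [Finset.sum_congr rfl fun i _ => Finset.sum_mul Finset.univ (fun j => DB i j * F j) (G i),
        Finset.sum_comm]
      exact Finset.sum_congr rfl fun i _ => Finset.sum_congr rfl fun j _ => by ring
    have e2 : (∑ i, (∑ j, DB i j * G j) * F i) = ∑ i, ∑ j, DB i j * (F i * G j) := by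
      rw [Finset.sum_congr rfl fun i _ => Finset.sum_mul Finset.univ (fun j => DB i j * G j) (F i)]
      exact Finset.sum_congr rfl fun i _ => Finset.sum_congr rfl fun j _ => by ring
    rw [e1, e2, Finset.mul_sum, ← Finset.sum_add_distrib]
    refine Finset.sum_congr rfl fun i _ => ?_
    rw [Finset.mul_sum, ← Finset.sum_add_distrib]
    exact Finset.sum_congr rfl fun j _ => by ring
  -- the commutator-corrected double sums cancel
  have g2 : (∑ i, ((∑ j, Bh j * FF j i) * G i + ((∑ j, Bh j * GG j i) * F i
        - Bh i * (∑ k, (FF i k * G k + F k * GG i k)))))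
      = 0 := by
    have e1 : (∑ i, (∑ j, Bh j * FF j i) * G i) = ∑ i, ∑ j, Bh i * FF i j * G j := by
      rw [Finset.sum_congr rfl fun i _ => Finset.sum_mul Finset.univ (fun j => Bh j * FF j i) (G i),
        Finset.sum_comm]
    have e2 : (∑ i, (∑ j, Bh j * GG j i) * F i) = ∑ i, ∑ j, Bh i * GG i j * F j := by
      rw [Finset.sum_congr rfl fun i _ => Finset.sum_mul Finset.univ (fun j => Bh j * GG j i) (F i),
        Finset.sum_comm]
    have e3 : (∑ i, Bh i * (∑ k, (FF i k * G k + F k * GG i k)))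
        = ∑ i, ∑ j, (Bh i * FF i j * G j + Bh i * GG i j * F j) := by
      refine Finset.sum_congr rfl fun i _ => ?_
      rw [Finset.mul_sum]
      exact Finset.sum_congr rfl fun j _ => by ring
    calc (∑ i, ((∑ j, Bh j * FF j i) * G i + ((∑ j, Bh j * GG j i) * F i
          - Bh i * (∑ k, (FF i k * G k + F k * GG i k)))))
        = (∑ i, (∑ j, Bh j * FF j i) * G i) + ((∑ i, (∑ j, Bh j * GG j i) * F i)
            - (∑ i, Bh i * (∑ k, (FF i k * G k + F k * GG i k)))) := by
          rw [Finset.sum_add_distrib, Finset.sum_sub_distrib]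
      _ = 0 := by
          rw [e1, e2, e3]
          rw [show (∑ i, ∑ j, (Bh i * FF i j * G j + Bh i * GG i j * F j))
              = (∑ i : Fin m, ∑ j : Fin m, Bh i * FF i j * G j)
                + (∑ i : Fin m, ∑ j : Fin m, Bh i * GG i j * F j) from by
            rw [← Finset.sum_add_distrib]
            exact Finset.sum_congr rfl fun i _ => Finset.sum_add_distrib]
          ring
  -- regroup the per-index summand
  have hsum : (∑ i, (-(1/2) * (((((∑ j, (DB i j * F j + Bh j * FF i j)) + (DBt i * TF + BN * TZF i)) * G i + df * GG i i) + ((((∑ j, (DB i j * G j + Bh j * GG i j)) + (DBt i * TG + BN * TZG i)) * F i + dg * FF i i))) - (DB i i * V + Bh i * (∑ k, (FF i k * G k + F k * GG i k))))))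
      = ∑ i, ((-(1/2)) * ((∑ j, DB i j * F j) * G i + (∑ j, DB i j * G j) * F i)
          + ((-(1/2)) * ((∑ j, Bh j * FF j i) * G i + ((∑ j, Bh j * GG j i) * F i
              - Bh i * (∑ k, (FF i k * G k + F k * GG i k))))
          + ((-(1/2)) * ((DBt i + 4 * J i) * (TG * F i + TF * G i))
          + ((-(1/2) * BN) * (TZF i * G i + F i * TZG i)
          + ((-(1/2) * df) * GG i i
          + ((-(1/2) * dg) * FF i i
          + (1/2) * (DB i i * V))))))) := by
    refine Finset.sum_congr rfl fun i _ => ?_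
    rw [h1 i, h2 i]
    ring
  rw [hsum]
  rw [Finset.sum_add_distrib, Finset.sum_add_distrib, Finset.sum_add_distrib,
    Finset.sum_add_distrib, Finset.sum_add_distrib, Finset.sum_add_distrib]
  rw [← Finset.mul_sum, ← Finset.mul_sum, ← Finset.mul_sum, ← Finset.mul_sum,
    ← Finset.mul_sum, ← Finset.mul_sum, ← Finset.mul_sum]
  rw [g1, g2]
  rw [show (∑ i, DB i i * V) = (∑ i, DB i i) * V from (Finset.sum_mul _ _ _).symm]
  ring

section Expansion

variable {f g : HPoint n → ℝ}

lemma divb_split (b : Fin (2 * n + 1) → HPoint n → ℝ) (p : HPoint n) :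
    (∑ j, Zfull j (b j) p)
      = (∑ i : Fin (2 * n), Zd i (b (hIdx i)) p) + Td (b (tIdx n)) p := by
  rw [sum_split (fun j => Zfull j (b j) p)]
  congr 1
  · exact Finset.sum_congr rfl fun i _ => by rw [Zfull_hIdx]
  · rw [Zfull_tIdx]

lemma Zd_bsum (b : Fin (2 * n + 1) → HPoint n → ℝ) (hb : ∀ j, ContDiff ℝ (⊤ : ℕ∞) (b j))
    (hf : ContDiff ℝ (⊤ : ℕ∞) f) (i : Fin (2 * n)) (p : HPoint n) :
    Zd i (fun q => ∑ j, b j q * Zfull j f q) p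
      = (∑ j : Fin (2 * n), (Zd i (b (hIdx j)) p * Zd j f p + b (hIdx j) p * Zd i (Zd j f) p))
        + (Zd i (b (tIdx n)) p * Td f p + b (tIdx n) p * Zd i (Td f) p) := by
  rw [Zd_sum i Finset.univ (fun j q => b j q * Zfull j f q)
    (fun j _ => ((hb j).mul (contDiff_Zfull hf j)).differentiable (by simp) p)]
  rw [Finset.sum_congr rfl (fun j _ => Zd_mul i ((hb j).differentiable (by simp) p)
    ((contDiff_Zfull hf j).differentiable (by simp) p))]
  rw [sum_split (fun j => Zd i (b j) p * Zfull j f p + b j p * Zd i (Zfull j f) p)]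
  congr 1
  · exact Finset.sum_congr rfl fun j _ => by rw [Zfull_hIdx]
  · rw [Zfull_tIdx]

lemma Zd_hV (hf : ContDiff ℝ (⊤ : ℕ∞) f) (hg : ContDiff ℝ (⊤ : ℕ∞) g) (i : Fin (2 * n)) (p : HPoint n) :
    Zd i (fun q => ∑ k : Fin (2 * n), Zd k f q * Zd k g q) p
      = ∑ k : Fin (2 * n), (Zd i (Zd k f) p * Zd k g p + Zd k f p * Zd i (Zd k g) p) := by
  rw [Zd_sum i Finset.univ (fun k q => Zd k f q * Zd k g q)
    (fun k _ => ((contDiff_Zd hf k).mul (contDiff_Zd hg k)).differentiable (by simp) p)]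
  exact Finset.sum_congr rfl fun k _ => Zd_mul i ((contDiff_Zd hf k).differentiable (by simp) p)
    ((contDiff_Zd hg k).differentiable (by simp) p)

lemma Td_hV (hf : ContDiff ℝ (⊤ : ℕ∞) f) (hg : ContDiff ℝ (⊤ : ℕ∞) g) (p : HPoint n) :
    Td (fun q => ∑ k : Fin (2 * n), Zd k f q * Zd k g q) p
      = ∑ k : Fin (2 * n), (Zd k (Td f) p * Zd k g p + Zd k f p * Zd k (Td g) p) := by
  rw [Td_sum Finset.univ (fun k q => Zd k f q * Zd k g q)
    (fun k _ => ((contDiff_Zd hf k).mul (contDiff_Zd hg k)).differentiable (by simp) p)]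
  refine Finset.sum_congr rfl fun k _ => ?_
  rw [Td_mul ((contDiff_Zd hf k).differentiable (by simp) p)
    ((contDiff_Zd hg k).differentiable (by simp) p), Td_Zd_comm hf k p, Td_Zd_comm hg k p]

/-- The compactly supported horizontal divergence terms. -/
def Wd (b : Fin (2 * n + 1) → HPoint n → ℝ) (f g : HPoint n → ℝ) (i : Fin (2 * n)) :
    HPoint n → ℝ := fun q =>
  -(1/2) * (((∑ j, b j q * Zfull j f q) * Zd i g q + (∑ j, b j q * Zfull j g q) * Zd i f q)
    - b (hIdx i) q * (∑ k : Fin (2 * n), Zd k f q * Zd k g q))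

/-- The compactly supported vertical divergence term. -/
def Wtd (b : Fin (2 * n + 1) → HPoint n → ℝ) (f g : HPoint n → ℝ) : HPoint n → ℝ := fun q =>
  (1/2) * (b (tIdx n) q * (∑ k : Fin (2 * n), Zd k f q * Zd k g q))

lemma contDiff_bsum (b : Fin (2 * n + 1) → HPoint n → ℝ) (hb : ∀ j, ContDiff ℝ (⊤ : ℕ∞) (b j))
    (hf : ContDiff ℝ (⊤ : ℕ∞) f) : ContDiff ℝ (⊤ : ℕ∞) (fun q => ∑ j, b j q * Zfull j f q) :=
  ContDiff.sum fun j _ => (hb j).mul (contDiff_Zfull hf j)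

lemma hcs_bsum (b : Fin (2 * n + 1) → HPoint n → ℝ) (hbc : ∀ j, HasCompactSupport (b j))
    (f : HPoint n → ℝ) : HasCompactSupport (fun q => ∑ j, b j q * Zfull j f q) :=
  hcs_sum Finset.univ _ fun j => (hbc j).mul_right

lemma contDiff_hV (hf : ContDiff ℝ (⊤ : ℕ∞) f) (hg : ContDiff ℝ (⊤ : ℕ∞) g) :
    ContDiff ℝ (⊤ : ℕ∞) (fun q => ∑ k : Fin (2 * n), Zd k f q * Zd k g q) :=
  ContDiff.sum fun k _ => (contDiff_Zd hf k).mul (contDiff_Zd hg k)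

lemma contDiff_Wd (b : Fin (2 * n + 1) → HPoint n → ℝ) (hb : ∀ j, ContDiff ℝ (⊤ : ℕ∞) (b j))
    (hf : ContDiff ℝ (⊤ : ℕ∞) f) (hg : ContDiff ℝ (⊤ : ℕ∞) g) (i : Fin (2 * n)) :
    ContDiff ℝ (⊤ : ℕ∞) (Wd b f g i) := by
  unfold Wd
  exact contDiff_const.mul ((((contDiff_bsum b hb hf).mul (contDiff_Zd hg i)).add
    ((contDiff_bsum b hb hg).mul (contDiff_Zd hf i))).sub
    ((hb _).mul (contDiff_hV hf hg)))

lemma hcs_Wd (b : Fin (2 * n + 1) → HPoint n → ℝ) (hbc : ∀ j, HasCompactSupport (b j))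
    (f g : HPoint n → ℝ) (i : Fin (2 * n)) : HasCompactSupport (Wd b f g i) := by
  unfold Wd
  exact (hcs_sub (((hcs_bsum b hbc f).mul_right).add ((hcs_bsum b hbc g).mul_right))
    ((hbc _).mul_right)).mul_left

lemma contDiff_Wtd (b : Fin (2 * n + 1) → HPoint n → ℝ) (hb : ∀ j, ContDiff ℝ (⊤ : ℕ∞) (b j))
    (hf : ContDiff ℝ (⊤ : ℕ∞) f) (hg : ContDiff ℝ (⊤ : ℕ∞) g) : ContDiff ℝ (⊤ : ℕ∞) (Wtd b f g) := by
  unfold Wtd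
  exact contDiff_const.mul ((hb _).mul (contDiff_hV hf hg))

lemma hcs_Wtd (b : Fin (2 * n + 1) → HPoint n → ℝ) (hbc : ∀ j, HasCompactSupport (b j))
    (f g : HPoint n → ℝ) : HasCompactSupport (Wtd b f g) := by
  unfold Wtd
  exact ((hbc _).mul_right).mul_left

lemma Zd_Wd (b : Fin (2 * n + 1) → HPoint n → ℝ) (hb : ∀ j, ContDiff ℝ (⊤ : ℕ∞) (b j))
    (hf : ContDiff ℝ (⊤ : ℕ∞) f) (hg : ContDiff ℝ (⊤ : ℕ∞) g) (i : Fin (2 * n)) (p : HPoint n) :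
    Zd i (Wd b f g i) p
      = -(1/2) * (((((∑ j : Fin (2 * n), (Zd i (b (hIdx j)) p * Zd j f p
              + b (hIdx j) p * Zd i (Zd j f) p))
            + (Zd i (b (tIdx n)) p * Td f p + b (tIdx n) p * Zd i (Td f) p)) * Zd i g p
            + (∑ j, b j p * Zfull j f p) * Zd i (Zd i g) p)
          + ((((∑ j : Fin (2 * n), (Zd i (b (hIdx j)) p * Zd j g p
              + b (hIdx j) p * Zd i (Zd j g) p))
            + (Zd i (b (tIdx n)) p * Td g p + b (tIdx n) p * Zd i (Td g) p)) * Zd i f p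
            + (∑ j, b j p * Zfull j g p) * Zd i (Zd i f) p)))
        - (Zd i (b (hIdx i)) p * (∑ k : Fin (2 * n), Zd k f p * Zd k g p)
          + b (hIdx i) p * (∑ k : Fin (2 * n), (Zd i (Zd k f) p * Zd k g p
              + Zd k f p * Zd i (Zd k g) p)))) := by
  have hdf : DifferentiableAt ℝ (fun q => ∑ j, b j q * Zfull j f q) p :=
    (contDiff_bsum b hb hf).differentiable (by simp) p
  have hdg : DifferentiableAt ℝ (fun q => ∑ j, b j q * Zfull j g q) p :=
    (contDiff_bsum b hb hg).differentiable (by simp) p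
  have hVd : DifferentiableAt ℝ (fun q => ∑ k : Fin (2 * n), Zd k f q * Zd k g q) p :=
    (contDiff_hV hf hg).differentiable (by simp) p
  have hZf : DifferentiableAt ℝ (Zd i f) p := (contDiff_Zd hf i).differentiable (by simp) p
  have hZg : DifferentiableAt ℝ (Zd i g) p := (contDiff_Zd hg i).differentiable (by simp) p
  have hbi : DifferentiableAt ℝ (b (hIdx i)) p := (hb _).differentiable (by simp) p
  unfold Wd
  rw [Zd_const_mul i (-(1/2)) (((hdf.fun_mul hZg).fun_add (hdg.fun_mul hZf)).fun_sub (hbi.fun_mul hVd))]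
  rw [Zd_sub i ((hdf.fun_mul hZg).fun_add (hdg.fun_mul hZf)) (hbi.fun_mul hVd)]
  rw [Zd_add i (hdf.fun_mul hZg) (hdg.fun_mul hZf)]
  rw [Zd_mul i hdf hZg, Zd_mul i hdg hZf, Zd_mul i hbi hVd]
  rw [Zd_bsum b hb hf i p, Zd_bsum b hb hg i p, Zd_hV hf hg i p]

lemma Td_Wtd (b : Fin (2 * n + 1) → HPoint n → ℝ) (hb : ∀ j, ContDiff ℝ (⊤ : ℕ∞) (b j))
    (hf : ContDiff ℝ (⊤ : ℕ∞) f) (hg : ContDiff ℝ (⊤ : ℕ∞) g) (p : HPoint n) :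
    Td (Wtd b f g) p
      = (1/2) * (Td (b (tIdx n)) p * (∑ k : Fin (2 * n), Zd k f p * Zd k g p)
        + b (tIdx n) p * (∑ k : Fin (2 * n), (Zd k (Td f) p * Zd k g p
            + Zd k f p * Zd k (Td g) p))) := by
  have hVd : DifferentiableAt ℝ (fun q => ∑ k : Fin (2 * n), Zd k f q * Zd k g q) p :=
    (contDiff_hV hf hg).differentiable (by simp) p
  have hbN : DifferentiableAt ℝ (b (tIdx n)) p := (hb _).differentiable (by simp) p
  unfold Wtd
  rw [Td_const_mul (1/2) (hbN.fun_mul hVd)]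
  rw [Td_mul hbN hVd]
  rw [Td_hV hf hg p]

end Expansion

/-- The integration-by-parts identity expressing the deformation of a
smooth compactly supported vector field `b`:
`-(1/2)∫ [df(b) Δ^H g + dg(b) Δ^H f - div b ⟨∇^H f, ∇^H g⟩]
  = ∫ ∑_{i,j} ((Z_i b_j + Z_j b_i)/2) Z_i f Z_j g
    + (1/2) ∫ ∑_k (Z_k b_N + 4 J(b)_k)(Tg · Z_k f + Tf · Z_k g)`. -/
theorem stmt19 {n : ℕ} (hn : 1 ≤ n)
    (b : Fin (2 * n + 1) → HPoint n → ℝ)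
    (hb : ∀ j, ContDiff ℝ (⊤ : ℕ∞) (b j) ∧ HasCompactSupport (b j))
    (f g : HPoint n → ℝ)
    (hf : ContDiff ℝ (⊤ : ℕ∞) f) (hfc : HasCompactSupport f)
    (hg : ContDiff ℝ (⊤ : ℕ∞) g) (hgc : HasCompactSupport g) :
    -(1 / 2) * ∫ p,
        ((∑ j : Fin (2 * n + 1), b j p * Zfull j f p) *
            (∑ i : Fin (2 * n), Zd i (Zd i g) p) +
          (∑ j : Fin (2 * n + 1), b j p * Zfull j g p) *
            (∑ i : Fin (2 * n), Zd i (Zd i f) p) -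
          (∑ j : Fin (2 * n + 1), Zfull j (b j) p) *
            (∑ k : Fin (2 * n), Zd k f p * Zd k g p))
      = (∫ p, ∑ i : Fin (2 * n), ∑ j : Fin (2 * n),
            ((Zd i (b (hIdx j)) p + Zd j (b (hIdx i)) p) / 2) * Zd i f p * Zd j g p) +
        (1 / 2) * ∫ p, ∑ k : Fin (2 * n),
            (Zd k (b (tIdx n)) p + 4 * Jcomp b k p) *
              (Td g p * Zd k f p + Td f p * Zd k g p) := by
  classical
  have hbs : ∀ j, ContDiff ℝ (⊤ : ℕ∞) (b j) := fun j => (hb j).1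
  have hbc : ∀ j, HasCompactSupport (b j) := fun j => (hb j).2
  have contDiff_Jcomp : ∀ k : Fin (2 * n), ContDiff ℝ (⊤ : ℕ∞) (Jcomp b k) := by
    intro k
    by_cases h : k.1 < n
    · have : Jcomp b k = fun p => -(b (hIdx (⟨n + k.1, by omega⟩ : Fin (2 * n))) p) := by
        funext p; unfold Jcomp; rw [dif_pos h]
      rw [this]; exact (hbs _).neg
    · have : Jcomp b k = fun p =>
          b (hIdx (⟨k.1 - n, by have := k.2; omega⟩ : Fin (2 * n))) p := by
        funext p; unfold Jcomp; rw [dif_neg h]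
      rw [this]; exact hbs _
  -- pointwise key identity
  have key : ∀ p : HPoint n,
      -(1 / 2) * ((∑ j : Fin (2 * n + 1), b j p * Zfull j f p) *
            (∑ i : Fin (2 * n), Zd i (Zd i g) p) +
          (∑ j : Fin (2 * n + 1), b j p * Zfull j g p) *
            (∑ i : Fin (2 * n), Zd i (Zd i f) p) -
          (∑ j : Fin (2 * n + 1), Zfull j (b j) p) *
            (∑ k : Fin (2 * n), Zd k f p * Zd k g p))
        = ((∑ i : Fin (2 * n), ∑ j : Fin (2 * n),
              ((Zd i (b (hIdx j)) p + Zd j (b (hIdx i)) p) / 2) * Zd i f p * Zd j g p)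
            + (1 / 2) * (∑ k : Fin (2 * n),
              (Zd k (b (tIdx n)) p + 4 * Jcomp b k p) *
                (Td g p * Zd k f p + Td f p * Zd k g p)))
          + ((∑ i : Fin (2 * n), Zd i (Wd b f g i) p) + Td (Wtd b f g) p) := by
    intro p
    rw [divb_split b p]
    rw [Finset.sum_congr rfl fun (i : Fin (2 * n)) _ => Zd_Wd b hbs hf hg i p]
    rw [Td_Wtd b hbs hf hg p]
    exact alg_core (fun i j => Zd i (b (hIdx j)) p) (fun i => Zd i (b (tIdx n)) p)
      (fun j => b (hIdx j) p) (fun i => Zd i f p) (fun i => Zd i g p)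
      (fun i => Zd i (Td f) p) (fun i => Zd i (Td g) p) (fun i => Jcomp b i p)
      (fun i j => Zd i (Zd j f) p) (fun i j => Zd i (Zd j g) p)
      (fun i j => zcp j i - zcp i j)
      (b (tIdx n) p) (Td (b (tIdx n)) p) (Td f p) (Td g p)
      (∑ j, b j p * Zfull j f p) (∑ j, b j p * Zfull j g p)
      (∑ k : Fin (2 * n), Zd k f p * Zd k g p)
      (fun i j => Zd_Zd_comm hf i j p) (fun i j => Zd_Zd_comm hg i j p)
      (fun i => sum_zcp b i p)
  -- integrability of the pieces
  have I1 : Integrable (fun p => ∑ i : Fin (2 * n), ∑ j : Fin (2 * n),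
      ((Zd i (b (hIdx j)) p + Zd j (b (hIdx i)) p) / 2) * Zd i f p * Zd j g p) :=
    integrable_cc
      (ContDiff.sum fun i _ => ContDiff.sum fun j _ =>
        ((((contDiff_Zd (hbs _) i).add (contDiff_Zd (hbs _) j)).div_const 2).mul
          (contDiff_Zd hf i)).mul (contDiff_Zd hg j))
      (hcs_sum _ _ fun i => hcs_sum _ _ fun j => (hcs_Zd hgc j).mul_left)
  have I2 : Integrable (fun p => ∑ k : Fin (2 * n),
      (Zd k (b (tIdx n)) p + 4 * Jcomp b k p) * (Td g p * Zd k f p + Td f p * Zd k g p)) :=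
    integrable_cc
      (ContDiff.sum fun k _ =>
        ((contDiff_Zd (hbs _) k).add (contDiff_const.mul (contDiff_Jcomp k))).mul
          (((contDiff_Td hg).mul (contDiff_Zd hf k)).add
            ((contDiff_Td hf).mul (contDiff_Zd hg k))))
      (hcs_sum _ _ fun k =>
        (((hcs_Zd hfc k).mul_left).add ((hcs_Zd hgc k).mul_left)).mul_left)
  have IW : ∀ i : Fin (2 * n), Integrable (fun p => Zd i (Wd b f g i) p) := fun i =>
    integrable_cc (contDiff_Zd (contDiff_Wd b hbs hf hg i) i)
      (hcs_Zd (hcs_Wd b hbc f g i) i)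
  have IWs : Integrable (fun p => ∑ i : Fin (2 * n), Zd i (Wd b f g i) p) :=
    integrable_cc (ContDiff.sum fun i _ => contDiff_Zd (contDiff_Wd b hbs hf hg i) i)
      (hcs_sum _ _ fun i => hcs_Zd (hcs_Wd b hbc f g i) i)
  have IT : Integrable (fun p => Td (Wtd b f g) p) :=
    integrable_cc (contDiff_Td (contDiff_Wtd b hbs hf hg)) (hcs_Td (hcs_Wtd b hbc f g))
  calc -(1 / 2) * ∫ p,
        ((∑ j : Fin (2 * n + 1), b j p * Zfull j f p) *
            (∑ i : Fin (2 * n), Zd i (Zd i g) p) +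
          (∑ j : Fin (2 * n + 1), b j p * Zfull j g p) *
            (∑ i : Fin (2 * n), Zd i (Zd i f) p) -
          (∑ j : Fin (2 * n + 1), Zfull j (b j) p) *
            (∑ k : Fin (2 * n), Zd k f p * Zd k g p))
      = ∫ p, -(1 / 2) *
        ((∑ j : Fin (2 * n + 1), b j p * Zfull j f p) *
            (∑ i : Fin (2 * n), Zd i (Zd i g) p) +
          (∑ j : Fin (2 * n + 1), b j p * Zfull j g p) *
            (∑ i : Fin (2 * n), Zd i (Zd i f) p) -
          (∑ j : Fin (2 * n + 1), Zfull j (b j) p) *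
            (∑ k : Fin (2 * n), Zd k f p * Zd k g p)) := (integral_const_mul _ _).symm
    _ = ∫ p, (((∑ i : Fin (2 * n), ∑ j : Fin (2 * n),
              ((Zd i (b (hIdx j)) p + Zd j (b (hIdx i)) p) / 2) * Zd i f p * Zd j g p)
            + (1 / 2) * (∑ k : Fin (2 * n),
              (Zd k (b (tIdx n)) p + 4 * Jcomp b k p) *
                (Td g p * Zd k f p + Td f p * Zd k g p)))
          + ((∑ i : Fin (2 * n), Zd i (Wd b f g i) p) + Td (Wtd b f g) p)) := by
        congr 1
        funext p
        exact key p
    _ = (∫ p, ((∑ i : Fin (2 * n), ∑ j : Fin (2 * n),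
              ((Zd i (b (hIdx j)) p + Zd j (b (hIdx i)) p) / 2) * Zd i f p * Zd j g p)
            + (1 / 2) * (∑ k : Fin (2 * n),
              (Zd k (b (tIdx n)) p + 4 * Jcomp b k p) *
                (Td g p * Zd k f p + Td f p * Zd k g p))))
        + ∫ p, ((∑ i : Fin (2 * n), Zd i (Wd b f g i) p) + Td (Wtd b f g) p) :=
        integral_add (I1.add (I2.const_mul _)) (IWs.add IT)
    _ = ((∫ p, ∑ i : Fin (2 * n), ∑ j : Fin (2 * n),
              ((Zd i (b (hIdx j)) p + Zd j (b (hIdx i)) p) / 2) * Zd i f p * Zd j g p)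
            + ∫ p, (1 / 2) * (∑ k : Fin (2 * n),
              (Zd k (b (tIdx n)) p + 4 * Jcomp b k p) *
                (Td g p * Zd k f p + Td f p * Zd k g p)))
        + ((∫ p, ∑ i : Fin (2 * n), Zd i (Wd b f g i) p) + ∫ p, Td (Wtd b f g) p) := by
        rw [integral_add I1 (I2.const_mul _), integral_add IWs IT]
    _ = (∫ p, ∑ i : Fin (2 * n), ∑ j : Fin (2 * n),
            ((Zd i (b (hIdx j)) p + Zd j (b (hIdx i)) p) / 2) * Zd i f p * Zd j g p) +
        (1 / 2) * ∫ p, ∑ k : Fin (2 * n),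
            (Zd k (b (tIdx n)) p + 4 * Jcomp b k p) *
              (Td g p * Zd k f p + Td f p * Zd k g p) := by
        rw [integral_const_mul]
        rw [integral_finset_sum _ (fun i _ => IW i)]
        rw [Finset.sum_congr rfl fun (i : Fin (2 * n)) _ =>
          integral_Zd_eq_zero (contDiff_Wd b hbs hf hg i) (hcs_Wd b hbc f g i) i]
        rw [integral_Td_eq_zero (contDiff_Wtd b hbs hf hg) (hcs_Wtd b hbc f g)]
        simp
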